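/- Let α, β, λ be nonzero complex numbers such that |α| = 1, |β| = 1, and |λ|² = 1/2. Then λX₃ is a unitary matrix: (λX₃)(λX₃)† = I₈. -/

import Mathlib

/-!
Write `X₃ = 1 + K` with `K` the anti-diagonal part. Each pair of mirrored entries of `K` is
`c, -1/c`, so `K² = -1`; and when `|α| = |β| = 1` every such `c` has `c̄ = 1/c`, so `K` is
skew-Hermitian. Hence `X₃ X₃† = (1 + K)(1 - K) = 1 - K² = 2`, and scaling by `λ` multiplies
this by `|λ|² = 1/2`.
-/

open Matrix

/-- The X-shaped matrix `X₃` with parameters `α, β`. -/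
noncomputable def X3 (α β : ℂ) : Matrix (Fin 8) (Fin 8) ℂ :=
  !![1, 0, 0, 0, 0, 0, 0, α * β ^ 2;
     0, 1, 0, 0, 0, 0, -β, 0;
     0, 0, 1, 0, 0, α, 0, 0;
     0, 0, 0, 1, -(1 / β), 0, 0, 0;
     0, 0, 0, β, 1, 0, 0, 0;
     0, 0, -(1 / α), 0, 0, 1, 0, 0;
     0, 1 / β, 0, 0, 0, 0, 1, 0;
     -(1 / (α * β ^ 2)), 0, 0, 0, 0, 0, 0, 1]

theorem one_add_mul_star_one_add_eq_two {R : Type*} [Ring R] [StarRing R] {K : R}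
    (hskew : star K = -K) (hsq : K * K = -1) : (1 + K) * star (1 + K) = 2 := by
  rw [star_add, star_one, hskew]
  calc (1 + K) * (1 + -K) = 1 - K * K := by noncomm_ring
    _ = 2 := by rw [hsq, sub_neg_eq_add, one_add_one_eq_two]

theorem smul_mul_conjTranspose_smul {m n : Type*} [Fintype n] (c : ℂ) (A : Matrix m n ℂ) :
    (c • A) * (c • A)ᴴ = ((‖c‖ : ℂ) ^ 2) • (A * Aᴴ) := by
  rw [conjTranspose_smul, smul_mul, Matrix.mul_smul, smul_smul, Complex.star_def,
    Complex.mul_conj']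

noncomputable def X3AntiDiag (α β : ℂ) : Matrix (Fin 8) (Fin 8) ℂ :=
  !![0, 0, 0, 0, 0, 0, 0, α * β ^ 2;
     0, 0, 0, 0, 0, 0, -β, 0;
     0, 0, 0, 0, 0, α, 0, 0;
     0, 0, 0, 0, -(1 / β), 0, 0, 0;
     0, 0, 0, β, 0, 0, 0, 0;
     0, 0, -(1 / α), 0, 0, 0, 0, 0;
     0, 1 / β, 0, 0, 0, 0, 0, 0;
     -(1 / (α * β ^ 2)), 0, 0, 0, 0, 0, 0, 0]

theorem X3_eq_one_add_X3AntiDiag (α β : ℂ) : X3 α β = 1 + X3AntiDiag α β := by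
  ext i j
  fin_cases i <;> fin_cases j <;> simp [X3, X3AntiDiag, one_apply]

theorem X3AntiDiag_mul_self {α β : ℂ} (hα : α ≠ 0) (hβ : β ≠ 0) :
    X3AntiDiag α β * X3AntiDiag α β = -1 := by
  ext i j
  fin_cases i <;> fin_cases j <;>
    simp [X3AntiDiag, mul_apply, Fin.sum_univ_succ, one_apply] <;> field_simp

theorem conjTranspose_X3AntiDiag {α β : ℂ} (hα : ‖α‖ = 1) (hβ : ‖β‖ = 1) :
    (X3AntiDiag α β)ᴴ = -X3AntiDiag α β := by
  have hα_inv : α⁻¹ = star α := Complex.inv_eq_conj hα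
  have hβ_inv : β⁻¹ = star β := Complex.inv_eq_conj hβ
  ext i j
  fin_cases i <;> fin_cases j <;> simp [X3AntiDiag, ← hα_inv, ← hβ_inv, mul_comm]

theorem X3_mul_conjTranspose {α β : ℂ} (hα : ‖α‖ = 1) (hβ : ‖β‖ = 1) :
    X3 α β * (X3 α β)ᴴ = (2 : ℂ) • 1 := by
  have hα₀ : α ≠ 0 := norm_ne_zero_iff.mp (hα ▸ one_ne_zero)
  have hβ₀ : β ≠ 0 := norm_ne_zero_iff.mp (hβ ▸ one_ne_zero)
  rw [two_smul, one_add_one_eq_two, X3_eq_one_add_X3AntiDiag, ← star_eq_conjTranspose]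
  exact one_add_mul_star_one_add_eq_two
    (by rw [star_eq_conjTranspose, conjTranspose_X3AntiDiag hα hβ]) (X3AntiDiag_mul_self hα₀ hβ₀)

theorem X3_unitary_general (α β lam : ℂ)
    (haα : ‖α‖ = 1) (haβ : ‖β‖ = 1)
    (hl : ‖lam‖ ^ 2 = 1 / 2) :
    (lam • X3 α β) * (lam • X3 α β)ᴴ = (1 : Matrix (Fin 8) (Fin 8) ℂ) := by
  have hl' : (‖lam‖ : ℂ) ^ 2 = 2⁻¹ := by rw [← Complex.ofReal_pow, hl]; norm_num
  rw [smul_mul_conjTranspose_smul, X3_mul_conjTranspose haα haβ, hl', smul_smul,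
    inv_mul_cancel₀ two_ne_zero, one_smul]

/-- If `|α| = 1`, `|β| = 1` and `|λ|² = 1/2`, then `λ X₃` is a unitary matrix. -/
theorem X3_unitary (α β lam : ℂ) (hα : α ≠ 0) (hβ : β ≠ 0) (hlam : lam ≠ 0)
    (haα : ‖α‖ = 1) (haβ : ‖β‖ = 1)
    (hl : ‖lam‖ ^ 2 = 1 / 2) :
    (lam • X3 α β) * (lam • X3 α β)ᴴ = (1 : Matrix (Fin 8) (Fin 8) ℂ) :=
  X3_unitary_general α β lam haα haβ hl
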